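/- For every t > 0 the series φ'_eff(t) := Σ_{k=1}^∞ k²·φ'(kt) converges (where φ'(s) = 1/sinh²(πs) − 2πs·cosh(πs)/sinh³(πs) is the derivative of φ), and as t → 0⁺ one has t³·φ'_eff(t) → −1/(3π); that is, φ'_eff(t) ∼ −1/(3πt³) as t → 0. -/

import Mathlib

/-!
Put `ψ(s) = s² φ'(s)`. Then `t³ Σ_k k² φ'(kt) = t Σ_k ψ(kt)` is a right Riemann sum of `ψ` on
`(0, ∞)`. It is the integral of the step function `s ↦ ψ(t ⌈s/t⌉)`, which tends to `ψ` pointwise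
and is dominated by `24 e^{-s}` because this majorant of `|ψ|` is decreasing; dominated
convergence gives `t Σ_k ψ(kt) → ∫₀^∞ ψ`. Expanding `1/sinh²` in powers of `e^{-2πs}` gives
`φ'(s) = Σ_n 4n(1 - 2πns) e^{-2πns}`, each term contributes `-2/(π³n²)` to `∫₀^∞ ψ`, and
`ζ(2) = π²/6` turns the total into `-1/(3π)`.
-/

open Real Filter

/-- The derivative of the wall-interaction force `φ(s) = s/sinh²(πs)`, namely
`φ'(s) = 1/sinh²(πs) − 2πs·cosh(πs)/sinh³(πs)`. -/
noncomputable def phi' (s : ℝ) : ℝ :=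
  1 / (Real.sinh (Real.pi * s)) ^ 2
    - 2 * Real.pi * s * Real.cosh (Real.pi * s) / (Real.sinh (Real.pi * s)) ^ 3

open MeasureTheory Set Topology
open scoped Nat

section RiemannSum

variable {f g : ℝ → ℝ} {t s : ℝ}

lemma ceil_div_eq_add_one_iff (ht : 0 < t) (k : ℕ) :
    ⌈s / t⌉₊ = k + 1 ↔ s ∈ Ioc (k * t) ((k + 1) * t) := by
  rw [Nat.ceil_eq_iff k.add_one_ne_zero, Nat.add_sub_cancel, lt_div_iff₀ ht, div_le_iff₀ ht]
  push_cast
  rfl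

lemma Ioi_zero_eq_iUnion_Ioc_nat_mul (ht : 0 < t) :
    Ioi (0 : ℝ) = ⋃ k : ℕ, Ioc (k * t) ((k + 1) * t) := by
  ext s
  simp only [mem_Ioi, mem_iUnion, ← ceil_div_eq_add_one_iff ht]
  constructor
  · intro hs
    exact ⟨⌈s / t⌉₊ - 1, (Nat.sub_add_cancel (Nat.ceil_pos.2 (div_pos hs ht))).symm⟩
  · rintro ⟨k, hk⟩
    exact (div_pos_iff_of_pos_right ht).1 (Nat.ceil_pos.1 (hk ▸ k.succ_pos))

lemma pairwise_disjoint_Ioc_nat_mul (ht : 0 < t) :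
    Pairwise (Function.onFun Disjoint fun k : ℕ => Ioc (k * t) ((k + 1) * t)) := by
  intro i j hij
  refine Set.disjoint_left.2 fun s hi hj => hij ?_
  rw [← ceil_div_eq_add_one_iff ht] at hi hj
  omega

lemma le_mul_ceil_div (ht : 0 < t) : s ≤ t * ⌈s / t⌉₊ :=
  (div_le_iff₀' ht).1 (Nat.le_ceil _)

lemma mul_ceil_div_lt (ht : 0 < t) (hs : 0 ≤ s) : t * ⌈s / t⌉₊ < s + t := by
  calc t * ⌈s / t⌉₊ < t * (s / t + 1) :=
        mul_lt_mul_of_pos_left (Nat.ceil_lt_add_one (div_nonneg hs ht.le)) ht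
    _ = s + t := by field_simp

noncomputable def riemannStep (f : ℝ → ℝ) (t s : ℝ) : ℝ := f (t * ⌈s / t⌉₊)

lemma riemannStep_eq_of_mem_Ioc {k : ℕ} (ht : 0 < t) (hs : s ∈ Ioc (k * t) ((k + 1) * t)) :
    riemannStep f t s = f ((k + 1) * t) := by
  rw [riemannStep, (ceil_div_eq_add_one_iff ht k).2 hs, mul_comm]
  push_cast
  rfl

lemma measurable_riemannStep (f : ℝ → ℝ) (t : ℝ) : Measurable (riemannStep f t) :=
  (measurable_from_nat (f := fun n : ℕ => f (t * n))).comp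
    (Nat.measurable_ceil.comp (measurable_id.div_const t))

lemma abs_riemannStep_le (hg : AntitoneOn g (Ioi 0)) (hfg : ∀ s ∈ Ioi 0, |f s| ≤ g s)
    (ht : 0 < t) (hs : 0 < s) : |riemannStep f t s| ≤ g s :=
  have hsample : 0 < t * ⌈s / t⌉₊ := hs.trans_le (le_mul_ceil_div ht)
  (hfg _ hsample).trans (hg hs hsample (le_mul_ceil_div ht))

lemma tendsto_riemannStep (hf : ContinuousOn f (Ioi 0)) (hs : 0 < s) :
    Tendsto (fun t => riemannStep f t s) (𝓝[>] 0) (𝓝 (f s)) := by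
  have hupper : Tendsto (fun t => s + t) (𝓝[>] 0) (𝓝 s) :=
    ((continuous_const_add s).tendsto' 0 s (add_zero s)).mono_left nhdsWithin_le_nhds
  have hsample : Tendsto (fun t => t * (⌈s / t⌉₊ : ℝ)) (𝓝[>] 0) (𝓝 s) :=
    tendsto_of_tendsto_of_tendsto_of_le_of_le' tendsto_const_nhds hupper
      (eventually_mem_nhdsWithin.mono fun t ht => le_mul_ceil_div ht)
      (eventually_mem_nhdsWithin.mono fun t ht => (mul_ceil_div_lt ht hs.le).le)
  exact ((hf.continuousAt (Ioi_mem_nhds hs)).tendsto).comp hsample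

lemma hasSum_integral_riemannStep (hg : AntitoneOn g (Ioi 0)) (hgi : IntegrableOn g (Ioi 0))
    (hfg : ∀ s ∈ Ioi 0, |f s| ≤ g s) (ht : 0 < t) :
    HasSum (fun k : ℕ => t * f ((k + 1) * t)) (∫ s in Ioi 0, riemannStep f t s) := by
  have hint : IntegrableOn (riemannStep f t) (Ioi 0) :=
    Integrable.mono' hgi (measurable_riemannStep f t).aestronglyMeasurable
      (ae_restrict_of_forall_mem measurableSet_Ioi fun s hs => abs_riemannStep_le hg hfg ht hs)
  have hpiece (k : ℕ) :
      ∫ s in Ioc (k * t) ((k + 1) * t), riemannStep f t s = t * f ((k + 1) * t) := by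
    rw [setIntegral_congr_fun measurableSet_Ioc fun s hs => riemannStep_eq_of_mem_Ioc ht hs,
      setIntegral_const, volume_real_Ioc, smul_eq_mul, add_mul, one_mul, add_sub_cancel_left,
      max_eq_left ht.le]
  rw [Ioi_zero_eq_iUnion_Ioc_nat_mul ht] at hint ⊢
  simpa only [hpiece] using
    hasSum_integral_iUnion (fun k => measurableSet_Ioc) (pairwise_disjoint_Ioc_nat_mul ht) hint

lemma summable_riemannSum (hg : AntitoneOn g (Ioi 0)) (hgi : IntegrableOn g (Ioi 0))
    (hfg : ∀ s ∈ Ioi 0, |f s| ≤ g s) (ht : 0 < t) : Summable fun k : ℕ => f ((k + 1) * t) :=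
  (summable_mul_left_iff ht.ne').1 (hasSum_integral_riemannStep hg hgi hfg ht).summable

theorem tendsto_riemannSum_integral_Ioi (hf : ContinuousOn f (Ioi 0))
    (hg : AntitoneOn g (Ioi 0)) (hgi : IntegrableOn g (Ioi 0)) (hfg : ∀ s ∈ Ioi 0, |f s| ≤ g s) :
    Tendsto (fun t => t * ∑' k : ℕ, f ((k + 1) * t)) (𝓝[>] 0) (𝓝 (∫ s in Ioi 0, f s)) := by
  have hstep : Tendsto (fun t => ∫ s in Ioi 0, riemannStep f t s) (𝓝[>] 0)
      (𝓝 (∫ s in Ioi 0, f s)) :=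
    tendsto_integral_filter_of_dominated_convergence g
      (Eventually.of_forall fun t => (measurable_riemannStep f t).aestronglyMeasurable)
      (eventually_mem_nhdsWithin.mono fun t ht =>
        ae_restrict_of_forall_mem measurableSet_Ioi fun s hs => abs_riemannStep_le hg hfg ht hs)
      hgi (ae_restrict_of_forall_mem measurableSet_Ioi fun s hs => tendsto_riemannStep hf hs)
  refine hstep.congr' (eventually_mem_nhdsWithin.mono fun t ht => ?_)
  dsimp only
  rw [← tsum_mul_left]
  exact (hasSum_integral_riemannStep hg hgi hfg ht).tsum_eq.symm

end RiemannSum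

lemma mul_exp_half_le_two_mul_sinh {x : ℝ} (hx : 0 ≤ x) : x * exp (x / 2) ≤ 2 * sinh x := by
  have hsinh : x / 2 ≤ sinh (x / 2) := self_le_sinh_iff.2 (by linarith)
  have hcosh : exp (x / 2) / 2 ≤ cosh (x / 2) := by
    rw [cosh_eq]
    linarith [exp_pos (-(x / 2))]
  calc x * exp (x / 2) = 4 * (x / 2) * (exp (x / 2) / 2) := by ring
    _ ≤ 4 * sinh (x / 2) * cosh (x / 2) := by gcongr
    _ = 2 * sinh (2 * (x / 2)) := by rw [sinh_two_mul]; ring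
    _ = 2 * sinh x := by ring_nf

lemma sq_div_sinh_sq_le {x : ℝ} (hx : 0 < x) : x ^ 2 / sinh x ^ 2 ≤ 4 * exp (-x) := by
  rw [div_le_iff₀ (pow_pos (sinh_pos_iff.2 hx) 2)]
  calc x ^ 2 = (x * exp (x / 2)) ^ 2 * exp (-x) := by
        rw [mul_pow, mul_assoc, ← exp_nat_mul, ← exp_add, Nat.cast_ofNat,
          mul_div_cancel₀ x two_ne_zero, add_neg_cancel, exp_zero, mul_one]
    _ ≤ (2 * sinh x) ^ 2 * exp (-x) :=
        mul_le_mul_of_nonneg_right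
          (pow_le_pow_left₀ (by positivity) (mul_exp_half_le_two_mul_sinh hx.le) 2) (exp_pos _).le
    _ = 4 * exp (-x) * sinh x ^ 2 := by ring

lemma mul_cosh_le_add_one_mul_sinh {x : ℝ} (hx : 0 ≤ x) : x * cosh x ≤ (x + 1) * sinh x := by
  have hdecay : x * exp (-x) ≤ sinh x :=
    (mul_le_of_le_one_right hx (exp_le_one_iff.2 (by linarith))).trans (self_le_sinh_iff.2 hx)
  have hcosh : cosh x = sinh x + exp (-x) := by
    rw [cosh_eq, sinh_eq]
    ring
  rw [hcosh]
  linarith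

lemma abs_sq_mul_phi'_le {s : ℝ} (hs : 0 < s) : |s ^ 2 * phi' s| ≤ 24 * exp (-s) := by
  set x := π * s with hx_def
  have hx : 0 < x := by positivity
  have hS : 0 < sinh x := sinh_pos_iff.2 hx
  have hsplit :
      s ^ 2 * phi' s = x ^ 2 / sinh x ^ 2 * (1 - 2 * (x * cosh x / sinh x)) / π ^ 2 := by
    rw [phi', ← hx_def]
    field_simp
    rw [hx_def]
    ring
  have hcoth : x * cosh x / sinh x ≤ x + 1 :=
    (div_le_iff₀ hS).2 (mul_cosh_le_add_one_mul_sinh hx.le)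
  have hcoth0 : 0 ≤ x * cosh x / sinh x := by positivity
  have hdecay : (1 + x) * exp (-x) ≤ 2 * exp (-s) := by
    calc (1 + x) * exp (-x) ≤ 2 * exp (x / 2) * exp (-x) := by
          gcongr; linarith [add_one_le_exp (x / 2)]
      _ = 2 * exp (-(x / 2)) := by rw [mul_assoc, ← exp_add]; ring_nf
      _ ≤ 2 * exp (-s) := by gcongr; nlinarith [pi_gt_three]
  rw [hsplit, abs_div, abs_mul, abs_of_nonneg (by positivity : 0 ≤ x ^ 2 / sinh x ^ 2),
    abs_of_pos (by positivity : 0 < π ^ 2)]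
  calc _ ≤ x ^ 2 / sinh x ^ 2 * |1 - 2 * (x * cosh x / sinh x)| :=
        div_le_self (by positivity) (by nlinarith [pi_gt_three])
    _ ≤ 4 * exp (-x) * (3 * (1 + x)) := by
        gcongr
        · exact sq_div_sinh_sq_le hx
        · rw [abs_le]; constructor <;> linarith
    _ ≤ 24 * exp (-s) := by linarith

lemma continuousOn_sq_mul_phi' : ContinuousOn (fun s => s ^ 2 * phi' s) (Ioi 0) := by
  intro s hs
  have hsinh : sinh (π * s) ≠ 0 := (sinh_pos_iff.2 (mul_pos pi_pos hs)).ne'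
  unfold phi'
  exact ContinuousAt.continuousWithinAt (by fun_prop (disch := positivity))

lemma hasSum_coe_sq_mul_geometric {𝕜 : Type*} [NormedField 𝕜] {r : 𝕜} (hr : ‖r‖ < 1) :
    HasSum (fun n : ℕ => (n : 𝕜) ^ 2 * r ^ n) (r * (1 + r) / (1 - r) ^ 3) := by
  have h1r : 1 - r ≠ 0 := fun h => by simp [← sub_eq_zero.1 h] at hr
  have hchoose (n : ℕ) : ((n + 2).choose 2 : 𝕜) * 2 = (n + 2) * (n + 1) := by
    have h := Nat.add_one_mul_choose_eq (n + 1) 1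
    rw [Nat.choose_one_right] at h
    have hnat : (n + 2).choose 2 * 2 = (n + 2) * (n + 1) := h.symm
    exact_mod_cast congrArg (Nat.cast (R := 𝕜)) hnat
  -- `n² = 2 C(n + 2, 2) - 3 C(n + 1, 1) + 1`
  have hvalue : r * (1 + r) / (1 - r) ^ 3
      = 2 * (1 / (1 - r) ^ (2 + 1)) - (3 * (1 / (1 - r) ^ (1 + 1)) - (1 - r)⁻¹) := by
    field_simp
    ring
  rw [hvalue]
  refine (((hasSum_choose_mul_geometric_of_norm_lt_one 2 hr).mul_left 2).sub
    (((hasSum_choose_mul_geometric_of_norm_lt_one 1 hr).mul_left 3).sub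
      (hasSum_geometric_of_norm_lt_one hr))).congr_fun fun n => ?_
  rw [Nat.choose_one_right]
  push_cast
  linear_combination (-r ^ n) * hchoose n

noncomputable def phi'Term (n : ℕ) (s : ℝ) : ℝ :=
  4 * n * (1 - 2 * π * n * s) * exp (-(2 * π * n * s))

lemma hasSum_phi'Term {s : ℝ} (hs : 0 < s) : HasSum (fun n => phi'Term n s) (phi' s) := by
  set u := exp (-(π * s)) with hu
  have hu0 : 0 < u := exp_pos _
  have hu1 : u < 1 := exp_lt_one_iff.2 (by nlinarith [pi_pos])
  have hr : ‖u ^ 2‖ < 1 := by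
    rw [norm_pow, Real.norm_of_nonneg hu0.le]
    exact pow_lt_one₀ hu0.le hu1 two_ne_zero
  have hexp : exp (π * s) = u⁻¹ := by rw [hu, exp_neg, inv_inv]
  have hsinh : sinh (π * s) = (1 - u ^ 2) / (2 * u) := by rw [sinh_eq, hexp, ← hu]; field_simp
  have hcosh : cosh (π * s) = (1 + u ^ 2) / (2 * u) := by rw [cosh_eq, hexp, ← hu]; field_simp
  have h1u : 1 - u ^ 2 ≠ 0 := by nlinarith
  have hterm (n : ℕ) :
      phi'Term n s = 4 * (n * (u ^ 2) ^ n) - 8 * π * s * (n ^ 2 * (u ^ 2) ^ n) := by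
    rw [phi'Term, hu, ← exp_nat_mul, ← exp_nat_mul]
    ring_nf
  have hvalue : phi' s = 4 * (u ^ 2 / (1 - u ^ 2) ^ 2)
      - 8 * π * s * (u ^ 2 * (1 + u ^ 2) / (1 - u ^ 2) ^ 3) := by
    rw [phi', hsinh, hcosh]
    field_simp
    ring
  rw [hvalue]
  exact (((hasSum_coe_mul_geometric_of_norm_lt_one hr).mul_left 4).sub
    ((hasSum_coe_sq_mul_geometric hr).mul_left (8 * π * s))).congr_fun hterm

lemma integral_pow_mul_exp_neg_mul_Ioi (k : ℕ) {b : ℝ} (hb : 0 < b) :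
    ∫ x in Ioi 0, x ^ k * exp (-(b * x)) = k ! / b ^ (k + 1) := by
  have h := integral_rpow_mul_exp_neg_mul_Ioi (a := k + 1) (by positivity) hb
  simp only [add_sub_cancel_right, rpow_natCast, Gamma_nat_eq_factorial] at h
  rw [← Nat.cast_add_one, rpow_natCast] at h
  rw [h, div_pow, one_pow]
  ring

lemma integrableOn_pow_mul_exp_neg_mul_Ioi (k : ℕ) {b : ℝ} (hb : 0 < b) :
    IntegrableOn (fun x => x ^ k * exp (-(b * x))) (Ioi 0) :=
  .of_integral_ne_zero (by rw [integral_pow_mul_exp_neg_mul_Ioi k hb]; positivity)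

lemma sq_mul_phi'Term (n : ℕ) (s : ℝ) :
    s ^ 2 * phi'Term n s = 4 * n * (s ^ 2 * exp (-(2 * π * n * s)))
      - 8 * π * n ^ 2 * (s ^ 3 * exp (-(2 * π * n * s))) := by
  rw [phi'Term]
  ring

lemma integrableOn_sq_mul_phi'Term (n : ℕ) :
    IntegrableOn (fun s => s ^ 2 * phi'Term n s) (Ioi 0) := by
  rcases n.eq_zero_or_pos with rfl | hn
  · simp [phi'Term]
  have hb : 0 < 2 * π * n := by positivity
  simp_rw [sq_mul_phi'Term]
  exact ((integrableOn_pow_mul_exp_neg_mul_Ioi 2 hb).const_mul _).sub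
    ((integrableOn_pow_mul_exp_neg_mul_Ioi 3 hb).const_mul _)

lemma integral_sq_mul_phi'Term (n : ℕ) :
    ∫ s in Ioi 0, s ^ 2 * phi'Term n s = -2 / π ^ 3 * (1 / n ^ 2) := by
  rcases n.eq_zero_or_pos with rfl | hn
  · -- both sides vanish, the right one because `1 / 0 = 0`
    simp [phi'Term]
  have hb : 0 < 2 * π * n := by positivity
  simp_rw [sq_mul_phi'Term]
  rw [integral_sub ((integrableOn_pow_mul_exp_neg_mul_Ioi 2 hb).const_mul _)
      ((integrableOn_pow_mul_exp_neg_mul_Ioi 3 hb).const_mul _),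
    integral_const_mul, integral_const_mul, integral_pow_mul_exp_neg_mul_Ioi 2 hb,
    integral_pow_mul_exp_neg_mul_Ioi 3 hb]
  simp only [Nat.factorial, Nat.cast_mul, Nat.cast_one]
  field_simp
  ring

lemma integral_norm_sq_mul_phi'Term_le (n : ℕ) :
    ∫ s in Ioi 0, ‖s ^ 2 * phi'Term n s‖ ≤ 4 / π ^ 3 * (1 / n ^ 2) := by
  rcases n.eq_zero_or_pos with rfl | hn
  · simp [phi'Term]
  have hb : 0 < 2 * π * n := by positivity
  have hI2 := (integrableOn_pow_mul_exp_neg_mul_Ioi 2 hb).const_mul (4 * n)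
  have hI3 := (integrableOn_pow_mul_exp_neg_mul_Ioi 3 hb).const_mul (8 * π * n ^ 2)
  calc ∫ s in Ioi 0, ‖s ^ 2 * phi'Term n s‖
      ≤ ∫ s in Ioi 0, 4 * n * (s ^ 2 * exp (-(2 * π * n * s)))
          + 8 * π * n ^ 2 * (s ^ 3 * exp (-(2 * π * n * s))) := by
        refine setIntegral_mono_on (integrableOn_sq_mul_phi'Term n).norm (hI2.add hI3)
          measurableSet_Ioi fun s hs => ?_
        rw [sq_mul_phi'Term]
        refine (norm_sub_le _ _).trans_eq ?_
        rw [mem_Ioi] at hs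
        rw [Real.norm_of_nonneg (by positivity), Real.norm_of_nonneg (by positivity)]
    _ = 4 / π ^ 3 * (1 / n ^ 2) := by
        rw [integral_add hI2 hI3, integral_const_mul, integral_const_mul,
          integral_pow_mul_exp_neg_mul_Ioi 2 hb, integral_pow_mul_exp_neg_mul_Ioi 3 hb]
        simp only [Nat.factorial, Nat.cast_mul, Nat.cast_one]
        field_simp
        ring

theorem integral_sq_mul_phi' : ∫ s in Ioi 0, s ^ 2 * phi' s = -(1 / (3 * π)) := by
  have hsummable : Summable fun n : ℕ => ∫ s in Ioi 0, ‖s ^ 2 * phi'Term n s‖ :=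
    (hasSum_zeta_two.summable.mul_left (4 / π ^ 3)).of_nonneg_of_le
      (fun n => integral_nonneg fun _ => norm_nonneg _) integral_norm_sq_mul_phi'Term_le
  have hsum := hasSum_integral_of_summable_integral_norm integrableOn_sq_mul_phi'Term hsummable
  rw [setIntegral_congr_fun measurableSet_Ioi
    fun s hs => ((hasSum_phi'Term hs).mul_left (s ^ 2)).tsum_eq] at hsum
  simp_rw [integral_sq_mul_phi'Term] at hsum
  have hvalue : -(1 / (3 * π)) = -2 / π ^ 3 * (π ^ 2 / 6) := by
    field_simp
    ring
  rw [hvalue]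
  exact hsum.unique (hasSum_zeta_two.mul_left _)

/-- For every `t > 0` the series `φ'_eff(t) = Σ_{k=1}^∞ k²·φ'(kt)` converges, and
`t³·φ'_eff(t) → −1/(3π)` as `t → 0⁺`, i.e. `φ'_eff(t) ∼ −1/(3πt³)` near `0`. -/
theorem stmt12 :
    (∀ t : ℝ, 0 < t → Summable (fun k : ℕ => ((k : ℝ) + 1) ^ 2 * phi' (((k : ℝ) + 1) * t))) ∧
    Tendsto (fun t : ℝ => t ^ 3 * ∑' k : ℕ, ((k : ℝ) + 1) ^ 2 * phi' (((k : ℝ) + 1) * t))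
      (nhdsWithin 0 (Set.Ioi 0)) (nhds (-(1 / (3 * Real.pi)))) := by
  have hg : AntitoneOn (fun s => 24 * exp (-s)) (Ioi 0) := fun a _ b _ hab => by
    dsimp only; gcongr
  have hgi : IntegrableOn (fun s => 24 * exp (-s)) (Ioi 0) :=
    (integrableOn_exp_neg_Ioi 0).const_mul 24
  have hfg : ∀ s ∈ Ioi (0 : ℝ), |s ^ 2 * phi' s| ≤ 24 * exp (-s) :=
    fun _ hs => abs_sq_mul_phi'_le hs
  have hrescale (t : ℝ) (k : ℕ) : (((k : ℝ) + 1) * t) ^ 2 * phi' ((k + 1) * t)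
      = t ^ 2 * (((k : ℝ) + 1) ^ 2 * phi' ((k + 1) * t)) := by ring
  constructor
  · intro t ht
    have h := summable_riemannSum hg hgi hfg ht
    simp_rw [hrescale] at h
    exact (summable_mul_left_iff (pow_pos ht 2).ne').1 h
  · have h := tendsto_riemannSum_integral_Ioi continuousOn_sq_mul_phi' hg hgi hfg
    rw [integral_sq_mul_phi'] at h
    refine h.congr fun t => ?_
    simp_rw [hrescale, tsum_mul_left]
    ring
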